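/- arXiv:2209.06461 — 7 statements merged into one kernel-verified Lean document; each statement's English description precedes it below -/
import Mathlib

section
/- Let μ be a probability measure on ℝ such that the identity function x ↦ x is μ-integrable, let t ∈ ℝ, and let A ⊆ ℝ be a measurable set with μ(A) = μ((−∞, t]). Then ∫_{(−∞,t]} x dμ(x) ≤ ∫_A x dμ(x); that is, among all measurable selections of drivers of a prescribed total mass, the lower set of inconvenience costs minimizes the total inconvenience cost. -/
/-!
Exchange argument: `Iic t` and `A` share `Iic t ∩ A`, and the remaining pieces `Iic t \ A` and
`A \ Iic t` have equal mass. On the first the cost is at most `t`, on the second at least `t`, so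
the integral over the first is at most `t` times the common mass, which is at most the integral
over the second.
-/

open MeasureTheory Set
open scoped ENNReal

section Exchange

variable {X : Type*} [MeasurableSpace X] {μ : Measure X} {f : X → ℝ} {s t : Set X} {c : ℝ}

theorem setIntegral_le_of_le_const_real (hs : MeasurableSet s) (hμs : μ s ≠ ∞)
    (hf : ∀ x ∈ s, f x ≤ c) (hfint : IntegrableOn f s μ) :
    ∫ x in s, f x ∂μ ≤ c * μ.real s := by
  rw [mul_comm, ← smul_eq_mul, ← setIntegral_const c]
  exact setIntegral_mono_on hfint (integrableOn_const hμs) hs hf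

theorem setIntegral_le_setIntegral_of_measure_eq (hs : MeasurableSet s) (ht : MeasurableSet t)
    (hμ : μ s = μ t) (hμs : μ s ≠ ∞) (hfs : IntegrableOn f s μ) (hft : IntegrableOn f t μ)
    (hle : ∀ x ∈ s \ t, f x ≤ c) (hge : ∀ x ∈ t \ s, c ≤ f x) :
    ∫ x in s, f x ∂μ ≤ ∫ x in t, f x ∂μ := by
  have hμ_sdiff : μ (s \ t) = μ (t \ s) :=
    measure_sdiff_symm hs.nullMeasurableSet ht.nullMeasurableSet hμ
      (measure_ne_top_of_subset inter_subset_left hμs)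
  rw [← integral_inter_add_sdiff ht hfs, ← integral_inter_add_sdiff hs hft, inter_comm t s]
  gcongr _ + ?_
  calc ∫ x in s \ t, f x ∂μ ≤ c * μ.real (s \ t) :=
        setIntegral_le_of_le_const_real (hs.diff ht)
          (measure_ne_top_of_subset sdiff_subset hμs) hle (hfs.mono_set sdiff_subset)
    _ = c * μ.real (t \ s) := by rw [measureReal_def, measureReal_def, hμ_sdiff]
    _ ≤ ∫ x in t \ s, f x ∂μ :=
        setIntegral_ge_of_const_le_real (ht.diff hs)
          (hμ_sdiff ▸ measure_ne_top_of_subset sdiff_subset hμs) hge (hft.mono_set sdiff_subset)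

end Exchange

/-- Among all measurable sets `A` of drivers of prescribed mass
`μ A = μ (Iic t)`, the lower set `Iic t` of inconvenience costs minimizes
the total inconvenience cost. -/
theorem lower_set_minimizes_total_cost
    (μ : Measure ℝ) [IsProbabilityMeasure μ]
    (hint : Integrable (fun x : ℝ => x) μ)
    (t : ℝ) (A : Set ℝ) (hA : MeasurableSet A)
    (hmass : μ A = μ (Iic t)) :
    ∫ x in Iic t, x ∂μ ≤ ∫ x in A, x ∂μ :=
  setIntegral_le_setIntegral_of_measure_eq measurableSet_Iic hA hmass.symm (measure_ne_top μ _)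
    hint.integrableOn hint.integrableOn (fun _ hx => hx.1) (fun _ hx => (not_le.mp hx.2).le)
end

section
/- Let ι be a finite nonempty type (indexing routes), let J : (ι → ℝ) → ℝ be differentiable at S*, let κ ≥ 0, and for each r ∈ ι let q_r : ℝ → ℝ be nondecreasing and continuous at S*_r. Define the social cost Φ(S) = J(S) + Σ_{r∈ι} ∫₀^{S_r} (q_r(s) + κ) ds. If S* with 0 < S*_r < 1 for all r minimizes Φ over the box {S : 0 ≤ S_r ≤ 1 for all r}, then for every r ∈ ι: q_r(S*_r) = −∂J/∂S_r(S*) − κ. Equivalently, the socially optimal inconvenience-cost threshold on route r is θ̄_r = v_r(S*) − κ, where v_r(S) := −∂J/∂S_r(S) is the LMP spread on route r. -/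
open Set intervalIntegral

/-! Along the coordinate line `t ↦ update S* r t` the social cost is `J` plus `∫₀ᵗ (q_r + κ)`
plus a constant. `S*` is interior to the box, so `t = S*_r` is a local minimum of this
restriction, and its derivative `∂J/∂S_r(S*) + q_r(S*_r) + κ` vanishes; the integral term is
differentiable there by the fundamental theorem of calculus, since a monotone integrand is
locally integrable and `q_r` is continuous at `S*_r`. -/

theorem Monotone.hasDerivAt_integral_right {f : ℝ → ℝ} (hf : Monotone f) (a : ℝ) {b : ℝ}
    (hb : ContinuousAt f b) : HasDerivAt (fun t => ∫ s in a..t, f s) (f b) b :=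
  integral_hasDerivAt_right hf.intervalIntegrable
    hf.measurable.aestronglyMeasurable.stronglyMeasurableAtFilter hb

theorem hasDerivAt_sum_apply_update {𝕜 F ι : Type*} [NontriviallyNormedField 𝕜]
    [NormedAddCommGroup F] [NormedSpace 𝕜 F] [Fintype ι] [DecidableEq ι]
    {G : ι → 𝕜 → F} (x : ι → 𝕜) {r : ι} {G' : F} (h : HasDerivAt (G r) G' (x r)) :
    HasDerivAt (fun t => ∑ i, G i (Function.update x r t i)) G' (x r) := by
  have hterm : ∀ i, HasDerivAt (fun t => G i (Function.update x r t i))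
      (if i = r then G' else 0) (x r) := by
    intro i
    by_cases hi : i = r
    · subst hi
      simpa using h
    · simpa [Function.update_of_ne hi, hi] using hasDerivAt_const (x r) (G i (x i))
  simpa using HasDerivAt.fun_sum (u := Finset.univ) fun i _ => hterm i

theorem IsMinOn.isLocalMin_update {ι X β : Type*} [TopologicalSpace X] [Preorder β]
    [DecidableEq ι] {f : (ι → X) → β} {s : Set (ι → X)} {x : ι → X} (hf : IsMinOn f s x)
    (hs : s ∈ nhds x) (r : ι) : IsLocalMin (fun t => f (Function.update x r t)) (x r) := by
  have hmin : IsLocalMin f (Function.update x r (x r)) := by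
    simpa using hf.isLocalMin hs
  exact hmin.comp_continuous (continuous_const.update r continuous_id).continuousAt

theorem unitBox_mem_nhds {ι : Type*} [Finite ι] {x : ι → ℝ} (hx : ∀ i, 0 < x i ∧ x i < 1) :
    {S : ι → ℝ | ∀ i, 0 ≤ S i ∧ S i ≤ 1} ∈ nhds x :=
  Filter.mem_of_superset (set_pi_mem_nhds finite_univ fun i _ => Icc_mem_nhds (hx i).1 (hx i).2)
    fun _ hS i => hS i (mem_univ i)

theorem commuter_social_optimum_first_order_general
    {ι : Type*} [Fintype ι] [DecidableEq ι]
    (J : (ι → ℝ) → ℝ) (Sstar : ι → ℝ)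
    (hJ : DifferentiableAt ℝ J Sstar)
    (κ : ℝ)
    (q : ι → ℝ → ℝ)
    (hq_mono : ∀ r, Monotone (q r))
    (hq_cont : ∀ r, ContinuousAt (q r) (Sstar r))
    (Φ : (ι → ℝ) → ℝ)
    (hΦ : ∀ S, Φ S = J S + ∑ r, ∫ s in (0:ℝ)..(S r), (q r s + κ))
    (hbox : ∀ r, 0 < Sstar r ∧ Sstar r < 1)
    (hmin : IsMinOn Φ {S : ι → ℝ | ∀ r, 0 ≤ S r ∧ S r ≤ 1} Sstar) :
    ∀ r, q r (Sstar r) = -(fderiv ℝ J Sstar (Pi.single r 1)) - κ := by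
  intro r
  have hJ_line : HasDerivAt (fun t => J (Function.update Sstar r t))
      (fderiv ℝ J Sstar (Pi.single r 1)) (Sstar r) := by
    refine HasFDerivAt.comp_hasDerivAt (Sstar r) ?_ (hasDerivAt_update Sstar r (Sstar r))
    simpa using hJ.hasFDerivAt
  have hcost_line : HasDerivAt (fun t => ∑ i, ∫ s in (0:ℝ)..(Function.update Sstar r t i),
      (q i s + κ)) (q r (Sstar r) + κ) (Sstar r) :=
    hasDerivAt_sum_apply_update (G := fun i t => ∫ s in (0:ℝ)..t, (q i s + κ)) Sstar
      (((hq_mono r).add_const κ).hasDerivAt_integral_right 0 ((hq_cont r).add continuousAt_const))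
  have hΦ_line : HasDerivAt (fun t => Φ (Function.update Sstar r t))
      (fderiv ℝ J Sstar (Pi.single r 1) + (q r (Sstar r) + κ)) (Sstar r) := by
    simpa only [hΦ] using hJ_line.fun_add hcost_line
  have hcrit := (hmin.isLocalMin_update (unitBox_mem_nhds hbox) r).hasDerivAt_eq_zero hΦ_line
  linarith

/-- Lemma 1: first-order characterization of the socially optimal
operation for commuter EVs with fixed routes. If `S*` with `0 < S*_r < 1` minimizes
the social cost `Φ(S) = J(S) + Σ_r ∫₀^{S_r} (q_r(s) + κ) ds` over the unit box, then
`q_r(S*_r) = -∂J/∂S_r(S*) - κ` for every route `r`. -/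
theorem commuter_social_optimum_first_order
    {ι : Type*} [Fintype ι] [Nonempty ι] [DecidableEq ι]
    (J : (ι → ℝ) → ℝ) (Sstar : ι → ℝ)
    (hJ : DifferentiableAt ℝ J Sstar)
    (κ : ℝ) (hκ : 0 ≤ κ)
    (q : ι → ℝ → ℝ)
    (hq_mono : ∀ r, Monotone (q r))
    (hq_cont : ∀ r, ContinuousAt (q r) (Sstar r))
    (Φ : (ι → ℝ) → ℝ)
    (hΦ : ∀ S, Φ S = J S + ∑ r, ∫ s in (0:ℝ)..(S r), (q r s + κ))
    (hbox : ∀ r, 0 < Sstar r ∧ Sstar r < 1)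
    (hmin : IsMinOn Φ {S : ι → ℝ | ∀ r, 0 ≤ S r ∧ S r ≤ 1} Sstar) :
    ∀ r, q r (Sstar r) = -(fderiv ℝ J Sstar (Pi.single r 1)) - κ :=
  commuter_social_optimum_first_order_general J Sstar hJ κ q hq_mono hq_cont Φ hΦ hbox hmin
end

section
/- Let ι be a finite nonempty type, let J : (ι → ℝ) → ℝ be differentiable at S*, let κ ≥ 0, and for each r ∈ ι let μ_r be a probability measure on ℝ with CDF F_r(θ) := μ_r((−∞, θ]). Suppose S* : ι → ℝ satisfies the fixed-point equations S*_r = F_r(θ̄_r) with θ̄_r := −∂J/∂S_r(S*) − κ for all r. Then the threshold strategy profile σ_r(θ) := 1 if θ ≤ θ̄_r and 0 otherwise is a Nash equilibrium consistent with S*: (i) ∫ σ_r(θ) dμ_r(θ) = S*_r for every r, and (ii) for every route r, every inconvenience cost θ ∈ ℝ, and every deviation s ∈ {0,1}, the payoff satisfies (θ̄_r − θ)·s ≤ (θ̄_r − θ)·σ_r(θ), i.e., no infinitesimal driver can improve her payoff (v_r(S*) − κ − θ)·s by unilaterally changing her decision. -/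
open MeasureTheory Set

/-! Taking part pays `θ̄_r - θ`, so joining exactly when `θ ≤ θ̄_r` maximises the payoff
`(θ̄_r - θ)·s` over all `s ∈ [0, 1]`; and the mass of drivers who join is
`μ_r(Iic θ̄_r) = F_r(θ̄_r)`, which is `S*_r` by the fixed-point equation. -/

theorem integral_ite_le_one_zero {α : Type*} [MeasurableSpace α] [TopologicalSpace α]
    [LinearOrder α] [OrderClosedTopology α] [OpensMeasurableSpace α] (μ : Measure α) (t : α) :
    ∫ x, (if x ≤ t then (1 : ℝ) else 0) ∂μ = (μ (Iic t)).toReal := by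
  simp_rw [← mem_Iic, ← indicator_apply (Iic t) (fun _ => (1 : ℝ))]
  rw [integral_indicator_const _ measurableSet_Iic, smul_eq_mul, mul_one, measureReal_def]

theorem mul_le_mul_ite_nonneg_of_mem_Icc {a s : ℝ} (hs : s ∈ Icc 0 1) :
    a * s ≤ a * if 0 ≤ a then 1 else 0 := by
  obtain ⟨hs₀, hs₁⟩ := hs
  split_ifs with ha
  · simpa using mul_le_mul_of_nonneg_left hs₁ ha
  · simpa using mul_nonpos_of_nonpos_of_nonneg (not_le.mp ha).le hs₀

theorem commuter_threshold_is_nash_equilibrium_general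
    {ι : Type*}
    (Sstar : ι → ℝ)
    (μ : ι → Measure ℝ)
    (F : ι → ℝ → ℝ)
    (hF : ∀ r θ, F r θ = ((μ r) (Iic θ)).toReal)
    (θbar : ι → ℝ)
    (hfix : ∀ r, Sstar r = F r (θbar r))
    (σ : ι → ℝ → ℝ)
    (hσ : ∀ r θ, σ r θ = if θ ≤ θbar r then (1 : ℝ) else 0) :
    (∀ r, ∫ θ, σ r θ ∂(μ r) = Sstar r) ∧
    (∀ r, ∀ θ : ℝ, ∀ s ∈ ({0, 1} : Set ℝ),
      (θbar r - θ) * s ≤ (θbar r - θ) * σ r θ) := by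
  refine ⟨fun r => ?_, fun r θ s hs => ?_⟩
  · simp_rw [hσ, hfix, hF]
    exact integral_ite_le_one_zero (μ r) (θbar r)
  · have hs' : s ∈ Icc (0 : ℝ) 1 := by rcases hs with rfl | rfl <;> norm_num
    simpa only [hσ, sub_nonneg] using mul_le_mul_ite_nonneg_of_mem_Icc (a := θbar r - θ) hs'

/-- Lemma 2: if the aggregate capacities `S*` solve the fixed-point
equations `S*_r = F_r(θ̄_r)` with `θ̄_r = -∂J/∂S_r(S*) - κ`, then the threshold
strategy profile `σ_r(θ) = 1_{θ ≤ θ̄_r}` is a Nash equilibrium consistent with `S*`: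
the strategies aggregate to `S*`, and no infinitesimal driver can improve her payoff
`(θ̄_r - θ)·s` by a unilateral deviation `s ∈ {0,1}`. -/
theorem commuter_threshold_is_nash_equilibrium
    {ι : Type*} [Fintype ι] [Nonempty ι] [DecidableEq ι]
    (J : (ι → ℝ) → ℝ) (Sstar : ι → ℝ)
    (hJ : DifferentiableAt ℝ J Sstar)
    (κ : ℝ) (hκ : 0 ≤ κ)
    (μ : ι → Measure ℝ) (hprob : ∀ r, IsProbabilityMeasure (μ r))
    (F : ι → ℝ → ℝ)
    (hF : ∀ r θ, F r θ = ((μ r) (Iic θ)).toReal)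
    (θbar : ι → ℝ)
    (hθbar : ∀ r, θbar r = -(fderiv ℝ J Sstar (Pi.single r 1)) - κ)
    (hfix : ∀ r, Sstar r = F r (θbar r))
    (σ : ι → ℝ → ℝ)
    (hσ : ∀ r θ, σ r θ = if θ ≤ θbar r then (1 : ℝ) else 0) :
    (∀ r, ∫ θ, σ r θ ∂(μ r) = Sstar r) ∧
    (∀ r, ∀ θ : ℝ, ∀ s ∈ ({0, 1} : Set ℝ),
      (θbar r - θ) * s ≤ (θbar r - θ) * σ r θ) :=
  commuter_threshold_is_nash_equilibrium_general Sstar μ F hF θbar hfix σ hσ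
end

section
/- Let ι be a finite nonempty type, let J : (ι → ℝ) → ℝ be convex and differentiable, let κ ≥ 0, and for each r ∈ ι let F_r : ℝ → ℝ be nondecreasing and g_r : ℝ → ℝ be nondecreasing with g_r(F_r(θ)) = θ for all θ ∈ ℝ. Define Φ(S) = J(S) + Σ_{r∈ι} ∫₀^{S_r} (g_r(s) + κ) ds. Suppose S* and θ̄ : ι → ℝ satisfy the Nash-equilibrium equations θ̄_r = −∂J/∂S_r(S*) − κ and S*_r = F_r(θ̄_r) for all r, with 0 < S*_r < 1 and g_r continuous at S*_r. Then S* is a global minimizer of Φ over {S : 0 ≤ S_r ≤ 1 for all r}; i.e., the Nash-equilibrium aggregate storage capacities for commuter EVs support the social welfare. -/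
/-!
The Nash-equilibrium equations say exactly that at `S*` the partial derivatives of the
social cost `Φ` vanish: `∂Φ/∂S_r(S*) = ∂J/∂S_r(S*) + g_r(S*_r) + κ = -θ̄_r + θ̄_r = 0`,
using `g_r ∘ F_r = id`. Since `J` is convex and each `∫₀^{S_r} (g_r + κ)` is convex
(its integrand is monotone), this stationary point is a global minimizer: `J` lies above
its tangent plane at `S*`, each integral lies above its tangent line
`(g_r(S*_r) + κ)(S_r - S*_r)`, and the two tangent terms cancel.
-/

open Set intervalIntegral

theorem ConvexOn.add_le_of_hasFDerivAt {E : Type*} [NormedAddCommGroup E] [NormedSpace ℝ E]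
    {f : E → ℝ} {f' : E →L[ℝ] ℝ} {x : E} (hf : ConvexOn ℝ univ f) (hf' : HasFDerivAt f f' x)
    (y : E) : f x + f' (y - x) ≤ f y := by
  have hline : ConvexOn ℝ univ (f ∘ AffineMap.lineMap (k := ℝ) x y) := by
    simpa using hf.comp_affineMap (AffineMap.lineMap (k := ℝ) x y)
  have hderiv : HasDerivAt (f ∘ AffineMap.lineMap (k := ℝ) x y) (f' (y - x)) 0 := by
    have hmap : HasDerivAt (AffineMap.lineMap (k := ℝ) x y : ℝ → E) (y - x) 0 :=
      AffineMap.hasDerivAt_lineMap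
    exact (AffineMap.lineMap_apply_zero (k := ℝ) x y ▸ hf').comp_hasDerivAt 0 hmap
  have hslope := hline.le_slope_of_hasDerivAt (mem_univ 0) (mem_univ 1) one_pos hderiv
  simp only [slope_def_field, Function.comp_apply, AffineMap.lineMap_apply_one,
    AffineMap.lineMap_apply_zero, sub_zero, div_one] at hslope
  linarith

theorem Monotone.mul_sub_le_intervalIntegral {h : ℝ → ℝ} (hh : Monotone h) (a b : ℝ) :
    h a * (b - a) ≤ ∫ s in a..b, h s := by
  rcases le_total a b with hab | hba
  · have hmono := integral_mono_on hab (intervalIntegrable_const (μ := MeasureTheory.volume))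
      hh.intervalIntegrable fun s hs => hh hs.1
    simpa [mul_comm] using hmono
  · have hmono := integral_mono_on hba hh.intervalIntegrable
      (intervalIntegrable_const (μ := MeasureTheory.volume)) fun s hs => hh hs.2
    rw [integral_symm]
    simp only [integral_const, smul_eq_mul] at hmono
    linarith

theorem ContinuousLinearMap.apply_eq_sum_mul_single {ι : Type*} [Fintype ι] [DecidableEq ι]
    (L : (ι → ℝ) →L[ℝ] ℝ) (v : ι → ℝ) : L v = ∑ r, v r * L (Pi.single r 1) := by
  conv_lhs => rw [pi_eq_sum_univ' v, map_sum]
  simp only [map_smul, smul_eq_mul]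

theorem isMinOn_univ_add_sum_integral_of_fderiv {ι : Type*} [Fintype ι] [DecidableEq ι]
    {J : (ι → ℝ) → ℝ} {h : ι → ℝ → ℝ} {x : ι → ℝ}
    (hJ : ConvexOn ℝ univ J) (hJx : DifferentiableAt ℝ J x) (hh : ∀ r, Monotone (h r))
    (hx : ∀ r, h r (x r) = -fderiv ℝ J x (Pi.single r 1)) :
    IsMinOn (fun S => J S + ∑ r, ∫ s in (0 : ℝ)..S r, h r s) univ x := by
  intro S _
  have htangent := hJ.add_le_of_hasFDerivAt hJx.hasFDerivAt S
  have hgrad : fderiv ℝ J x (S - x) = -∑ r, h r (x r) * (S r - x r) := by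
    rw [ContinuousLinearMap.apply_eq_sum_mul_single, ← Finset.sum_neg_distrib]
    refine Finset.sum_congr rfl fun r _ => ?_
    rw [hx r, Pi.sub_apply]
    ring
  have hintegral : ∀ r, h r (x r) * (S r - x r)
      ≤ (∫ s in (0 : ℝ)..S r, h r s) - ∫ s in (0 : ℝ)..x r, h r s := fun r => by
    rw [integral_interval_sub_left (hh r).intervalIntegrable (hh r).intervalIntegrable]
    exact (hh r).mul_sub_le_intervalIntegral _ _
  have hsum := Finset.sum_le_sum fun r (_ : r ∈ Finset.univ) => hintegral r
  rw [Finset.sum_sub_distrib] at hsum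
  show J x + _ ≤ J S + _
  linarith

theorem commuter_nash_supports_social_welfare_general
    {ι : Type*} [Fintype ι] [DecidableEq ι]
    (J : (ι → ℝ) → ℝ)
    (hJconv : ConvexOn ℝ Set.univ J)
    (hJdiff : Differentiable ℝ J)
    (κ : ℝ)
    (F : ι → ℝ → ℝ)
    (g : ι → ℝ → ℝ) (hg_mono : ∀ r, Monotone (g r))
    (hgF : ∀ r θ, g r (F r θ) = θ)
    (Φ : (ι → ℝ) → ℝ)
    (hΦ : ∀ S, Φ S = J S + ∑ r, ∫ s in (0:ℝ)..(S r), (g r s + κ))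
    (Sstar : ι → ℝ) (θbar : ι → ℝ)
    (hθbar : ∀ r, θbar r = -(fderiv ℝ J Sstar (Pi.single r 1)) - κ)
    (hfix : ∀ r, Sstar r = F r (θbar r)) :
    IsMinOn Φ {S : ι → ℝ | ∀ r, 0 ≤ S r ∧ S r ≤ 1} Sstar := by
  have hstationary : ∀ r, g r (Sstar r) + κ = -fderiv ℝ J Sstar (Pi.single r 1) := fun r => by
    rw [hfix r, hgF, hθbar]
    ring
  rw [show Φ = _ from funext hΦ]
  exact (isMinOn_univ_add_sum_integral_of_fderiv hJconv (hJdiff Sstar)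
    (fun r => (hg_mono r).add_const κ) hstationary).on_subset (subset_univ _)

/-- Theorem 1: any Nash equilibrium of the commuter EV battery
sharing game supports the social welfare. If `S*` and thresholds `θ̄` satisfy the
Nash-equilibrium equations `θ̄_r = -∂J/∂S_r(S*) - κ`, `S*_r = F_r(θ̄_r)` with
`0 < S*_r < 1`, then `S*` globally minimizes the social cost
`Φ(S) = J(S) + Σ_r ∫₀^{S_r} (g_r(s) + κ) ds` over the unit box. -/
theorem commuter_nash_supports_social_welfare
    {ι : Type*} [Fintype ι] [Nonempty ι] [DecidableEq ι]
    (J : (ι → ℝ) → ℝ)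
    (hJconv : ConvexOn ℝ Set.univ J)
    (hJdiff : Differentiable ℝ J)
    (κ : ℝ) (hκ : 0 ≤ κ)
    (F : ι → ℝ → ℝ) (hF_mono : ∀ r, Monotone (F r))
    (g : ι → ℝ → ℝ) (hg_mono : ∀ r, Monotone (g r))
    (hgF : ∀ r θ, g r (F r θ) = θ)
    (Φ : (ι → ℝ) → ℝ)
    (hΦ : ∀ S, Φ S = J S + ∑ r, ∫ s in (0:ℝ)..(S r), (g r s + κ))
    (Sstar : ι → ℝ) (θbar : ι → ℝ)
    (hθbar : ∀ r, θbar r = -(fderiv ℝ J Sstar (Pi.single r 1)) - κ)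
    (hfix : ∀ r, Sstar r = F r (θbar r))
    (hbox : ∀ r, 0 < Sstar r ∧ Sstar r < 1)
    (hg_cont : ∀ r, ContinuousAt (g r) (Sstar r)) :
    IsMinOn Φ {S : ι → ℝ | ∀ r, 0 ≤ S r ∧ S r ≤ 1} Sstar :=
  commuter_nash_supports_social_welfare_general J hJconv hJdiff κ F g hg_mono hgF Φ hΦ Sstar θbar
    hθbar hfix
end

section
/- Let ι be a finite nonempty type, let J : (ι → ℝ) → ℝ be convex and differentiable, let κ : ι → ℝ, and let q : ℝ → ℝ be nondecreasing; define G(T) = ∫₀^T q(s) ds and Ψ(S) = J(S) + Σ_{r∈ι} κ_r S_r + G(Σ_{r∈ι} S_r). Suppose S* with S*_r ≥ 0 for all r satisfies, with T* := Σ_r S*_r, q continuous at T*, and θ̄ := q(T*): for all r ∈ ι, −∂J/∂S_r(S*) − κ_r ≤ θ̄, with equality whenever S*_r > 0. Then S* is a global minimizer of Ψ over the nonnegative orthant {S : S_r ≥ 0 for all r}; i.e., the Nash-equilibrium aggregate storage capacities of on-demand EVs support the social welfare. -/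
open Set intervalIntegral

/-- Gradient inequality for a convex differentiable function. -/
lemma grad_ineq_aux {E : Type*} [NormedAddCommGroup E] [NormedSpace ℝ E]
    {J : E → ℝ} (hJconv : ConvexOn ℝ Set.univ J) (hJdiff : Differentiable ℝ J)
    (x y : E) : J x + fderiv ℝ J x (y - x) ≤ J y := by
  rcases eq_or_ne y x with rfl | hne
  · simp
  set φ : ℝ → ℝ := fun t => J (x + t • (y - x)) with hφ
  have hconv : ConvexOn ℝ Set.univ φ := by
    have := hJconv.comp_affineMap (AffineMap.lineMap x y : ℝ →ᵃ[ℝ] E)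
    have hpre : (AffineMap.lineMap x y : ℝ →ᵃ[ℝ] E) ⁻¹' Set.univ = Set.univ := by simp
    rw [hpre] at this
    have hfun : φ = J ∘ ⇑(AffineMap.lineMap x y) := by
      funext t
      simp only [φ, Function.comp_apply, AffineMap.lineMap_apply_module]
      congr 1
      module
    rw [hfun]
    exact this
  have hline : HasDerivAt (fun t : ℝ => x + t • (y - x)) (y - x) 0 := by
    simpa using ((hasDerivAt_id (0:ℝ)).smul_const (y - x)).const_add x
  have hder : HasDerivAt φ (fderiv ℝ J x (y - x)) 0 := by
    have hx0 : HasFDerivAt J (fderiv ℝ J x) (x + (0:ℝ) • (y - x)) := by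
      simpa using (hJdiff x).hasFDerivAt
    exact hx0.comp_hasDerivAt 0 hline
  have hs := hconv.le_slope_of_hasDerivAt (Set.mem_univ 0) (Set.mem_univ 1)
    zero_lt_one hder
  have : slope φ 0 1 = φ 1 - φ 0 := by simp [slope_def_field]
  rw [this] at hs
  have h0 : φ 0 = J x := by simp [φ]
  have h1 : φ 1 = J y := by simp [φ]
  rw [h0, h1] at hs
  linarith

/-- Subgradient inequality for the integral of a monotone function. -/
lemma integral_ge_aux {q : ℝ → ℝ} (hq : Monotone q) (a b : ℝ) :
    q a * (b - a) ≤ ∫ s in a..b, q s := by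
  rcases le_total a b with hab | hab
  · have h := intervalIntegral.integral_mono_on hab
      (_root_.intervalIntegrable_const (c := q a) (μ := MeasureTheory.volume)) hq.intervalIntegrable
      (fun x hx => hq hx.1)
    simpa [mul_comm] using h
  · have h := intervalIntegral.integral_mono_on hab
      hq.intervalIntegrable (_root_.intervalIntegrable_const (c := q a) (μ := MeasureTheory.volume))
      (fun x hx => hq hx.2)
    rw [intervalIntegral.integral_symm]
    simp only [intervalIntegral.integral_const, smul_eq_mul] at h ⊢
    nlinarith [h]

/-- Theorem 2: any Nash equilibrium of the on-demand EV battery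
sharing game supports the social welfare. If `S* ≥ 0` satisfies the equilibrium
conditions (`-∂J/∂S_r(S*) - κ_r ≤ θ̄` with equality on routes with `S*_r > 0`,
where `θ̄ = q(Σ_r S*_r)`), then `S*` globally minimizes the social cost
`Ψ(S) = J(S) + Σ_r κ_r S_r + ∫₀^{Σ_r S_r} q(s) ds` over the nonnegative orthant. -/
theorem on_demand_nash_supports_social_welfare
    {ι : Type*} [Fintype ι] [Nonempty ι] [DecidableEq ι]
    (J : (ι → ℝ) → ℝ)
    (hJconv : ConvexOn ℝ Set.univ J)
    (hJdiff : Differentiable ℝ J)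
    (κ : ι → ℝ)
    (q : ℝ → ℝ) (hq_mono : Monotone q)
    (G : ℝ → ℝ) (hG : ∀ T, G T = ∫ s in (0:ℝ)..T, q s)
    (Ψ : (ι → ℝ) → ℝ)
    (hΨ : ∀ S, Ψ S = J S + ∑ r, κ r * S r + G (∑ r, S r))
    (Sstar : ι → ℝ) (hpos : ∀ r, 0 ≤ Sstar r)
    (Tstar : ℝ) (hT : Tstar = ∑ r, Sstar r)
    (hq_cont : ContinuousAt q Tstar)
    (θbar : ℝ) (hθbar : θbar = q Tstar)
    (hle : ∀ r, -(fderiv ℝ J Sstar (Pi.single r 1)) - κ r ≤ θbar)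
    (heq : ∀ r, 0 < Sstar r → -(fderiv ℝ J Sstar (Pi.single r 1)) - κ r = θbar) :
    IsMinOn Ψ {S : ι → ℝ | ∀ r, 0 ≤ S r} Sstar := by
  rw [isMinOn_iff]
  intro S hS
  set D : ι → ℝ := fun r => fderiv ℝ J Sstar (Pi.single r 1) with hD
  -- gradient inequality for J
  have h1 : J Sstar + fderiv ℝ J Sstar (S - Sstar) ≤ J S :=
    grad_ineq_aux hJconv hJdiff Sstar S
  -- expand the directional derivative
  have hdecomp : (S - Sstar) = ∑ r, (S r - Sstar r) • (Pi.single r 1 : ι → ℝ) := by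
    funext j
    simp [Finset.sum_apply, Pi.single_apply, mul_ite]
  have h2 : fderiv ℝ J Sstar (S - Sstar) = ∑ r, (S r - Sstar r) * D r := by
    rw [hdecomp, map_sum]
    refine Finset.sum_congr rfl fun r _ => ?_
    rw [map_smul, smul_eq_mul, hD]
  -- convexity inequality for G
  have hqi : IntervalIntegrable q MeasureTheory.volume 0 Tstar :=
    hq_mono.intervalIntegrable
  have hqi2 : IntervalIntegrable q MeasureTheory.volume 0 (∑ r, S r) :=
    hq_mono.intervalIntegrable
  have h3 : G Tstar + θbar * ((∑ r, S r) - Tstar) ≤ G (∑ r, S r) := by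
    have hsub : (∫ s in (0:ℝ)..(∑ r, S r), q s) - (∫ s in (0:ℝ)..Tstar, q s)
        = ∫ s in Tstar..(∑ r, S r), q s :=
      intervalIntegral.integral_interval_sub_left hqi2 hqi
    have := integral_ge_aux hq_mono Tstar (∑ r, S r)
    rw [hG, hG, hθbar]
    linarith
  -- per-route nonnegativity
  have h4 : ∀ r, 0 ≤ (S r - Sstar r) * (D r + κ r + θbar) := by
    intro r
    rcases (hpos r).lt_or_eq with hpos' | hzero
    · have := heq r hpos'
      have : D r + κ r + θbar = 0 := by linarith
      rw [this, mul_zero]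
    · have hfac : 0 ≤ D r + κ r + θbar := by have := hle r; linarith
      have hfac2 : 0 ≤ S r - Sstar r := by have := hS r; linarith
      positivity
  have hsum : 0 ≤ ∑ r, (S r - Sstar r) * (D r + κ r + θbar) :=
    Finset.sum_nonneg fun r _ => h4 r
  have hkey : ∑ r, (S r - Sstar r) * (D r + κ r + θbar)
      = (∑ r, (S r - Sstar r) * D r)
        + ((∑ r, κ r * S r) - ∑ r, κ r * Sstar r)
        + θbar * ((∑ r, S r) - Tstar) := by
    rw [hT, ← Finset.sum_sub_distrib, ← Finset.sum_sub_distrib, Finset.mul_sum,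
      ← Finset.sum_add_distrib, ← Finset.sum_add_distrib]
    exact Finset.sum_congr rfl fun r _ => by ring
  rw [hΨ S, hΨ Sstar, ← hT]
  rw [hkey] at hsum
  rw [h2] at h1
  linarith
end

section
/- Let ι be a finite nonempty type, let J : (ι → ℝ) → ℝ be convex and differentiable, let κ ≥ 0 and κ : ι → ℝ (written κ_r), let g_r : ℝ → ℝ be nondecreasing for each r, and let q : ℝ → ℝ be nondecreasing. Define the hybrid social cost Φ(X, Y) = J(X + Y) + Σ_{r∈ι} ∫₀^{X_r} (g_r(s) + κ) ds + Σ_{r∈ι} κ_r Y_r + ∫₀^{Σ_r Y_r} q(s) ds. Suppose (X*, Y*) satisfies, with S* := X* + Y*, v_r := −∂J/∂S_r(S*), T* := Σ_r Y*_r, θ̄ := q(T*), q continuous at T*, and for every r: 0 < X*_r < 1, g_r continuous at X*_r, g_r(X*_r) = v_r − κ, Y*_r ≥ 0, v_r − κ_r ≤ θ̄ with equality whenever Y*_r > 0. Then (X*, Y*) is a global minimizer of Φ over {(X, Y) : 0 ≤ X_r ≤ 1 and Y_r ≥ 0 for all r}; i.e., the joint Nash equilibrium of commuter and on-demand EVs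 supports the social welfare. -/
open Set intervalIntegral

/-- For a monotone `f`, `∫ s in a..x, f s ≥ f a * (x - a)`. -/
lemma mono_integral_ge {f : ℝ → ℝ} (hf : Monotone f) (a x : ℝ) :
    f a * (x - a) ≤ ∫ s in a..x, f s := by
  rcases le_total a x with h | h
  · have h1 : (∫ _ in a..x, f a) ≤ ∫ s in a..x, f s :=
      intervalIntegral.integral_mono_on h intervalIntegrable_const
        hf.intervalIntegrable (fun s hs => hf hs.1)
    simpa [intervalIntegral.integral_const, smul_eq_mul, mul_comm] using h1
  · have h1 : (∫ s in x..a, f s) ≤ ∫ _ in x..a, f a :=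
      intervalIntegral.integral_mono_on h hf.intervalIntegrable
        intervalIntegrable_const (fun s hs => hf hs.2)
    rw [intervalIntegral.integral_const, smul_eq_mul] at h1
    have h2 : (∫ s in a..x, f s) = -∫ s in x..a, f s :=
      (intervalIntegral.integral_symm x a)
    rw [h2]
    nlinarith [h1]

/-- For a monotone `f`, `∫₀^x f − ∫₀^a f ≥ f a * (x - a)`. -/
lemma mono_integral_diff_ge {f : ℝ → ℝ} (hf : Monotone f) (a x : ℝ) :
    f a * (x - a) ≤ (∫ s in (0:ℝ)..x, f s) - ∫ s in (0:ℝ)..a, f s := by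
  have hi1 : IntervalIntegrable f MeasureTheory.volume 0 a := hf.intervalIntegrable
  have hi2 : IntervalIntegrable f MeasureTheory.volume a x := hf.intervalIntegrable
  have hadd := intervalIntegral.integral_add_adjacent_intervals hi1 hi2
  have h := mono_integral_ge hf a x
  linarith

/-- Theorem 3: any joint Nash equilibrium of commuter and on-demand
EVs supports the social welfare. If `(X*, Y*)` satisfies the joint equilibrium
conditions, then it globally minimizes the hybrid social cost
`Φ(X,Y) = J(X+Y) + Σ_r ∫₀^{X_r}(g_r(s)+κ) ds + Σ_r κ_r Y_r + ∫₀^{Σ_r Y_r} q(s) ds`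
over `{(X,Y) : 0 ≤ X_r ≤ 1, Y_r ≥ 0}`. -/
theorem hybrid_nash_supports_social_welfare
    {ι : Type*} [Fintype ι] [Nonempty ι] [DecidableEq ι]
    (J : (ι → ℝ) → ℝ)
    (hJconv : ConvexOn ℝ Set.univ J)
    (hJdiff : Differentiable ℝ J)
    (κ : ℝ) (hκ : 0 ≤ κ)
    (κflex : ι → ℝ)
    (g : ι → ℝ → ℝ) (hg_mono : ∀ r, Monotone (g r))
    (q : ℝ → ℝ) (hq_mono : Monotone q)
    (Φ : (ι → ℝ) → (ι → ℝ) → ℝ)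
    (hΦ : ∀ X Y, Φ X Y = J (X + Y) + ∑ r, (∫ s in (0:ℝ)..(X r), (g r s + κ))
      + ∑ r, κflex r * Y r + ∫ s in (0:ℝ)..(∑ r, Y r), q s)
    (Xstar Ystar : ι → ℝ)
    (Sstar : ι → ℝ) (hS : Sstar = Xstar + Ystar)
    (v : ι → ℝ) (hv : ∀ r, v r = -(fderiv ℝ J Sstar (Pi.single r 1)))
    (Tstar : ℝ) (hT : Tstar = ∑ r, Ystar r)
    (θbar : ℝ) (hθbar : θbar = q Tstar)
    (hq_cont : ContinuousAt q Tstar)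
    (hXbox : ∀ r, 0 < Xstar r ∧ Xstar r < 1)
    (hg_cont : ∀ r, ContinuousAt (g r) (Xstar r))
    (hgX : ∀ r, g r (Xstar r) = v r - κ)
    (hYpos : ∀ r, 0 ≤ Ystar r)
    (hle : ∀ r, v r - κflex r ≤ θbar)
    (heq : ∀ r, 0 < Ystar r → v r - κflex r = θbar) :
    IsMinOn (fun P : (ι → ℝ) × (ι → ℝ) => Φ P.1 P.2)
      {P : (ι → ℝ) × (ι → ℝ) | ∀ r, (0 ≤ P.1 r ∧ P.1 r ≤ 1) ∧ 0 ≤ P.2 r}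
      (Xstar, Ystar) := by
  -- Gradient inequality for the convex differentiable `J`.
  have hgrad : ∀ z : ι → ℝ, fderiv ℝ J Sstar (z - Sstar) ≤ J z - J Sstar := by
    intro z
    set w : ι → ℝ := z - Sstar with hw
    set φ : ℝ → ℝ := fun t => J (Sstar + t • w) with hφ
    have hφeq : φ = J ∘ (AffineMap.lineMap Sstar z : ℝ →ᵃ[ℝ] (ι → ℝ)) := by
      funext t
      simp [hφ, AffineMap.lineMap_apply, hw, add_comm]
    have hφconv : ConvexOn ℝ univ φ := by
      rw [hφeq]
      simpa using hJconv.comp_affineMap (AffineMap.lineMap Sstar z)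
    have hc : HasDerivAt (fun t : ℝ => Sstar + t • w) w (0 : ℝ) := by
      simpa using ((hasDerivAt_id (0 : ℝ)).smul_const w).const_add Sstar
    have h0 : Sstar + (0 : ℝ) • w = Sstar := by simp
    have hJ' : HasFDerivAt J (fderiv ℝ J Sstar) (Sstar + (0 : ℝ) • w) := by
      rw [h0]; exact (hJdiff Sstar).hasFDerivAt
    have hd : HasDerivAt φ (fderiv ℝ J Sstar w) (0 : ℝ) :=
      hJ'.comp_hasDerivAt 0 hc
    have hslope := hφconv.le_slope_of_hasDerivAt (mem_univ (0 : ℝ)) (mem_univ (1 : ℝ))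
      zero_lt_one hd
    have hslope1 : slope φ 0 1 = J z - J Sstar := by
      have h1 : Sstar + w = z := by simp [hw]
      simp [slope_def_field, hφ, h0, h1]
    rw [hslope1] at hslope
    exact hslope
  -- Linearity of the differential over the coordinate basis.
  have hLsum : ∀ u : ι → ℝ, fderiv ℝ J Sstar u
      = ∑ r, u r * fderiv ℝ J Sstar (Pi.single r 1) := by
    intro u
    have hu : u = ∑ r, u r • (Pi.single r (1:ℝ) : ι → ℝ) := by
      funext j
      simp [Finset.sum_apply, Pi.single_apply, mul_ite]
    conv_lhs => rw [hu]
    rw [map_sum]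
    simp [smul_eq_mul]
  intro P hP
  simp only [Set.mem_setOf_eq] at hP
  obtain ⟨X, Y⟩ := P
  show Φ Xstar Ystar ≤ Φ X Y
  -- Step 1: convexity inequality for J.
  have hJineq : ∑ r, (X r + Y r - Sstar r) * (-(v r)) ≤ J (X + Y) - J Sstar := by
    have h1 := hgrad (X + Y)
    rw [hLsum ((X + Y) - Sstar)] at h1
    refine le_trans (le_of_eq ?_) h1
    refine Finset.sum_congr rfl fun r _ => ?_
    have hvr := hv r
    have : fderiv ℝ J Sstar (Pi.single r 1) = -(v r) := by rw [hvr]; ring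
    simp only [Pi.sub_apply, Pi.add_apply, this]
  -- Step 2: commuter integral terms.
  have hcomm : ∀ r, v r * (X r - Xstar r) ≤
      (∫ s in (0:ℝ)..(X r), (g r s + κ)) - ∫ s in (0:ℝ)..(Xstar r), (g r s + κ) := by
    intro r
    have hm : Monotone (fun s => g r s + κ) := fun a b hab => by
      simpa using add_le_add_right (hg_mono r hab) κ
    have h := mono_integral_diff_ge hm (Xstar r) (X r)
    have hval : g r (Xstar r) + κ = v r := by rw [hgX r]; ring
    calc v r * (X r - Xstar r) = (g r (Xstar r) + κ) * (X r - Xstar r) := by rw [hval]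
    _ ≤ _ := h
  have hsumA : ∑ r, v r * (X r - Xstar r) ≤
      (∑ r, ∫ s in (0:ℝ)..(X r), (g r s + κ))
        - ∑ r, ∫ s in (0:ℝ)..(Xstar r), (g r s + κ) := by
    rw [← Finset.sum_sub_distrib]
    exact Finset.sum_le_sum fun r _ => hcomm r
  -- Step 3: on-demand integral term.
  have hqineq : θbar * ((∑ r, Y r) - Tstar) ≤
      (∫ s in (0:ℝ)..(∑ r, Y r), q s) - ∫ s in (0:ℝ)..Tstar, q s := by
    have h := mono_integral_diff_ge hq_mono Tstar (∑ r, Y r)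
    rwa [← hθbar] at h
  -- Step 4: linear cost term.
  have hsumB : (∑ r, κflex r * Y r) - ∑ r, κflex r * Ystar r
      = ∑ r, κflex r * (Y r - Ystar r) := by
    rw [← Finset.sum_sub_distrib]
    exact Finset.sum_congr rfl fun r _ => by ring
  -- Key nonnegativity from equilibrium conditions.
  have hterm : ∀ r, 0 ≤ (θbar - (v r - κflex r)) * (Y r - Ystar r) := by
    intro r
    rcases (hYpos r).lt_or_eq with hpos | hzero
    · rw [heq r hpos]; simp
    · have hz : Ystar r = 0 := hzero.symm
      have h1 : 0 ≤ θbar - (v r - κflex r) := by linarith [hle r]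
      have h2 : 0 ≤ Y r - Ystar r := by rw [hz]; simpa using (hP r).2
      exact mul_nonneg h1 h2
  have hkey : 0 ≤ ∑ r, (θbar - (v r - κflex r)) * (Y r - Ystar r) :=
    Finset.sum_nonneg fun r _ => hterm r
  -- Algebraic identity combining the linearized terms.
  have hid : (∑ r, (X r + Y r - Sstar r) * (-(v r)))
      + (∑ r, v r * (X r - Xstar r))
      + (∑ r, κflex r * (Y r - Ystar r))
      + θbar * ((∑ r, Y r) - Tstar)
      = ∑ r, (θbar - (v r - κflex r)) * (Y r - Ystar r) := by
    rw [hT, hS]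
    have hθsum : θbar * ((∑ r, Y r) - ∑ r, Ystar r)
        = ∑ r, θbar * (Y r - Ystar r) := by
      rw [← Finset.sum_sub_distrib, Finset.mul_sum]
    rw [hθsum, ← Finset.sum_add_distrib, ← Finset.sum_add_distrib,
      ← Finset.sum_add_distrib]
    refine Finset.sum_congr rfl fun r _ => ?_
    simp only [Pi.add_apply]
    ring
  -- Conclude.
  rw [hΦ X Y, hΦ Xstar Ystar, ← hS, ← hT]
  linarith [hJineq, hsumA, hqineq, hkey, hid, hsumB]
end

section
/- Let a, b, c, κ ∈ ℝ with a > 0, and let F : ℝ → ℝ be nondecreasing. Then there is at most one S ∈ ℝ satisfying the fixed-point equation S = F(c − 2aS − b − κ). Consequently, since the socially optimal capacity S^{sw} and the Nash-equilibrium capacity S^{NE} in the two-bus example both satisfy this equation, S^{sw} = S^{NE}. -/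
/-- in the two-bus example, the fixed-point equation
`S = F(c - 2aS - b - κ)` has at most one solution; hence the socially optimal
capacity and the Nash-equilibrium capacity coincide. -/
theorem two_bus_fixed_point_unique
    (a b c κ : ℝ) (ha : 0 < a)
    (F : ℝ → ℝ) (hF : Monotone F)
    (Ssw SNE : ℝ)
    (hsw : Ssw = F (c - 2 * a * Ssw - b - κ))
    (hNE : SNE = F (c - 2 * a * SNE - b - κ)) :
    Ssw = SNE := by
  rcases lt_trichotomy Ssw SNE with h | h | h
  · exfalso
    have harg : c - 2 * a * SNE - b - κ ≤ c - 2 * a * Ssw - b - κ := by nlinarith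
    have := hF harg
    rw [← hNE, ← hsw] at this
    linarith
  · exact h
  · exfalso
    have harg : c - 2 * a * Ssw - b - κ ≤ c - 2 * a * SNE - b - κ := by nlinarith
    have := hF harg
    rw [← hNE, ← hsw] at this
    linarith
end
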